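/- Every simple graph satisfying property P is a perfect graph. -/

import Mathlib

/-- Property `P` of the paper: for any two disjoint edges `(v1,w1)` and
`(v2,w2)` of `G`, if `(v2,v1)` is an edge then `(w2,v1)` or `(w2,w1)` is an
edge of `G`. -/
def SimpleGraph.PropertyP {V : Type*} (G : SimpleGraph V) : Prop :=
  ∀ ⦃v1 w1 v2 w2 : V⦄, G.Adj v1 w1 → G.Adj v2 w2 →
    v1 ≠ v2 → v1 ≠ w2 → w1 ≠ v2 → w1 ≠ w2 →
    G.Adj v2 v1 → (G.Adj w2 v1 ∨ G.Adj w2 w1)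

/-- The clique number of a simple graph. -/
noncomputable def SimpleGraph.cliqueNumber {V : Type*} (G : SimpleGraph V) : ℕ :=
  sSup {n : ℕ | ∃ s : Finset V, G.IsNClique n s}

/-- A finite simple graph is perfect if for every induced subgraph, the
chromatic number equals the clique number. -/
def SimpleGraph.IsPerfect {V : Type*} (G : SimpleGraph V) : Prop :=
  ∀ S : Set V, (G.induce S).chromaticNumber = ((G.induce S).cliqueNumber : ℕ∞)

/-!
By property `P`, if a vertex `d ∉ {a, b}` is adjacent to an endpoint of the edge `ab`, then so is
every neighbour of `d` outside `{a, b}`; following a walk, every vertex in the component of `ab` is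
`a`, `b`, or adjacent to one of them. Hence non-adjacency is transitive inside each connected
component, i.e. every component is complete multipartite. Giving each part its own colour and
picking one vertex per part shows that chromatic and clique numbers agree componentwise, and `P`
passes to induced subgraphs.
-/

namespace SimpleGraph

variable {V W : Type*} {G : SimpleGraph V}

theorem PropertyP.comap {H : SimpleGraph W} (hP : G.PropertyP) (f : H ↪g G) : H.PropertyP :=
  fun _ _ _ _ h₁ h₂ n₁ n₂ n₃ n₄ h =>
    (hP (f.map_adj_iff.2 h₁) (f.map_adj_iff.2 h₂) (f.injective.ne n₁) (f.injective.ne n₂)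
      (f.injective.ne n₃) (f.injective.ne n₄) (f.map_adj_iff.2 h)).imp
      f.map_adj_iff.1 f.map_adj_iff.1

theorem PropertyP.eq_or_adj_of_reachable (hP : G.PropertyP) {a b c : V} (hab : G.Adj a b)
    (hca : G.Reachable c a) : c = a ∨ c = b ∨ G.Adj c a ∨ G.Adj c b := by
  obtain ⟨p⟩ := hca
  induction p generalizing b with
  | nil => exact Or.inl rfl
  | @cons c d a hcd p ih =>
    by_cases hca : c = a
    · exact Or.inl hca
    by_cases hcb : c = b
    · exact Or.inr (Or.inl hcb)
    rcases ih hab with rfl | rfl | hda | hdb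
    · exact Or.inr (Or.inr (Or.inl hcd))
    · exact Or.inr (Or.inr (Or.inr hcd))
    · by_cases hdb : d = b
      · exact Or.inr (Or.inr (Or.inr (hdb ▸ hcd)))
      exact Or.inr (Or.inr (hP hab hcd.symm hda.ne' (Ne.symm hca) (Ne.symm hdb) (Ne.symm hcb) hda))
    · by_cases hda : d = a
      · exact Or.inr (Or.inr (Or.inl (hda ▸ hcd)))
      exact Or.inr (Or.inr (hP hab.symm hcd.symm hdb.ne' (Ne.symm hcb) (Ne.symm hda)
        (Ne.symm hca) hdb).symm)

theorem PropertyP.isCompleteMultipartite_toSimpleGraph (hP : G.PropertyP)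
    (c : G.ConnectedComponent) : c.toSimpleGraph.IsCompleteMultipartite := by
  refine ⟨fun x y z hxy hyz (hxz : G.Adj x z) => ?_⟩
  have hyx : G.Reachable y x := ConnectedComponent.exact (y.2.trans x.2.symm)
  rcases hP.eq_or_adj_of_reachable hxz hyx with h | h | h | h
  · exact hyz (Subtype.ext h ▸ hxz)
  · exact hxy (Subtype.ext h ▸ hxz)
  · exact hxy h.symm
  · exact hyz h

theorem IsCompleteMultipartite.colorable_cliqueNum [Finite V] (h : G.IsCompleteMultipartite) :
    G.Colorable G.cliqueNum :=
  h.colorable_of_cliqueFree (n := G.cliqueNum + 1) fun s hs => by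
    have := hs.isClique.card_le_cliqueNum
    have := hs.card_eq
    omega

theorem PropertyP.colorable_cliqueNum [Finite V] (hP : G.PropertyP) :
    G.Colorable G.cliqueNum :=
  colorable_iff_forall_connectedComponent.2 fun c =>
    (hP.isCompleteMultipartite_toSimpleGraph c).colorable_cliqueNum.mono (G.cliqueNum_induce_le _)

theorem PropertyP.chromaticNumber_eq_cliqueNum [Finite V] (hP : G.PropertyP) :
    G.chromaticNumber = G.cliqueNum :=
  le_antisymm hP.colorable_cliqueNum.chromaticNumber_le G.cliqueNum_le_chromaticNumber

end SimpleGraph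

theorem isPerfect_of_propertyP {V : Type} [Fintype V] (G : SimpleGraph V)
    (hP : G.PropertyP) : G.IsPerfect :=
  fun S => (hP.comap (SimpleGraph.Embedding.induce S)).chromaticNumber_eq_cliqueNum
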